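/- With the generalized eigenbasis setup and π the s-orthogonal projection onto span{φ_1, …, φ_l}, let Ṽ := {v ∈ V : s(v, φ_j) = 0 for j = 1, …, l} and let V_0 be the a-orthogonal complement of Ṽ in V. For j = 1, …, l let ψ_j ∈ V be the unique element satisfying a(ψ_j, v) = s(φ_j, πv) for all v ∈ V. Then ψ_1, …, ψ_l form a basis of V_0. -/

import Mathlib

/-!
Since `v - πv` is `s`-orthogonal to `φ_j` for `j ≤ l`, the defining relation of `ψ_j` reads
`a(ψ_j, v) = s(φ_j, v) = λ_j a(φ_j, v)`, so `ψ_j = λ_j φ_j`. Hence the `ψ_j` are independent and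
span `W = span{φ_j : j ≤ l}`. By the eigenvalue relation `Ṽ` is the `a`-orthogonal complement
of `W`, and `span{φ_j : j > l}` is a complement of `W` that is `a`-orthogonal to it, so
`V_0 = (W^⊥)^⊥ = W`.
-/

open scoped ComplexConjugate

/-- A Hermitian positive definite sesquilinear form on a complex vector space:
linear in the first argument, Hermitian symmetric (hence conjugate-linear in the
second argument), and with `(a v v)` real and strictly positive for `v ≠ 0`. -/
def IsHermitianPD {V : Type*} [AddCommGroup V] [Module ℂ V] (a : V → V → ℂ) : Prop :=
  (∀ u v w : V, a (u + v) w = a u w + a v w) ∧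
  (∀ (c : ℂ) (u v : V), a (c • u) v = c * a u v) ∧
  (∀ u v : V, a u v = conj (a v u)) ∧
  (∀ v : V, v ≠ 0 → 0 < (a v v).re)

open Submodule Set

theorem Submodule.span_range_smul_of_ne_zero {K V ι : Type*} [Field K] [AddCommGroup V]
    [Module K V] {v : ι → V} {c : ι → K} (hc : ∀ i, c i ≠ 0) :
    span K (range fun i => c i • v i) = span K (range v) := by
  refine le_antisymm (span_le.2 ?_) (span_le.2 ?_) <;> rintro _ ⟨i, rfl⟩
  · exact smul_mem _ _ (subset_span ⟨i, rfl⟩)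
  · rw [← inv_smul_smul₀ (hc i) (v i)]
    exact smul_mem _ _ (subset_span ⟨i, rfl⟩)

namespace IsHermitianPD

variable {V : Type*} [AddCommGroup V] [Module ℂ V] {a : V → V → ℂ}

lemma conj_symm (ha : IsHermitianPD a) (u v : V) : conj (a u v) = a v u :=
  (ha.2.2.1 v u).symm

def toSesq (ha : IsHermitianPD a) : V →ₗ[ℂ] V →ₗ⋆[ℂ] ℂ :=
  LinearMap.mk₂'ₛₗ _ _ a ha.1 ha.2.1
    (fun u v w => by rw [← ha.conj_symm, ha.1, map_add, ha.conj_symm, ha.conj_symm])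
    (fun c u v => by rw [← ha.conj_symm, ha.2.1, map_mul, ha.conj_symm, smul_eq_mul])

@[simp] lemma toSesq_apply (ha : IsHermitianPD a) (u v : V) : ha.toSesq u v = a u v := rfl

lemma eq_zero_comm (ha : IsHermitianPD a) {u v : V} : a u v = 0 ↔ a v u = 0 := by
  rw [← ha.conj_symm, map_eq_zero]

lemma eq_zero_of_self_eq_zero (ha : IsHermitianPD a) {v : V} (h : a v v = 0) : v = 0 := by
  by_contra hv
  simpa [h] using ha.2.2.2 v hv

lemma ext_left (ha : IsHermitianPD a) {u w : V} (h : ∀ v, a u v = a w v) : u = w := by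
  refine sub_eq_zero.1 (ha.eq_zero_of_self_eq_zero ?_)
  rw [← ha.toSesq_apply, LinearMap.map_sub₂, ha.toSesq_apply, ha.toSesq_apply, h, sub_self]

lemma eq_zero_of_mem_span_left (ha : IsHermitianPD a) {S : Set V} {u w : V} (hu : u ∈ span ℂ S)
    (h : ∀ x ∈ S, a x w = 0) : a u w = 0 :=
  span_le (p := LinearMap.ker (ha.toSesq.flip w)) |>.2 h hu

lemma orthogonal_orthogonal_eq (ha : IsHermitianPD a) {p q : Submodule ℂ V} (hpq : p ⊔ q = ⊤)
    (horth : ∀ x ∈ p, ∀ y ∈ q, a x y = 0) :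
    {u : V | ∀ w, (∀ x ∈ p, a x w = 0) → a u w = 0} = p := by
  ext u
  refine ⟨fun hu => ?_, fun hu w hw => hw u hu⟩
  obtain ⟨x, hx, y, hy, rfl⟩ := mem_sup.1 (hpq ▸ mem_top : u ∈ p ⊔ q)
  have hy0 : y = 0 := by
    refine ha.eq_zero_of_self_eq_zero ?_
    have := hu y fun x' hx' => horth x' hx' y hy
    rwa [ha.1, horth x hx y hy, zero_add] at this
  simpa [hy0] using hx

end IsHermitianPD

section GeneralizedEigenbasis

variable {V : Type*} [AddCommGroup V] [Module ℂ V] {a s : V → V → ℂ}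

lemma apply_eq_zero_iff_of_eigenvector (hs : IsHermitianPD s) {x w : V} {c : ℂ} (hc : c ≠ 0)
    (heig : ∀ w, s x w = c * a x w) : s w x = 0 ↔ a x w = 0 := by
  rw [hs.eq_zero_comm, heig, mul_eq_zero, or_iff_right hc]

lemma eq_smul_of_apply_eq_apply_proj (ha : IsHermitianPD a) (hs : IsHermitianPD s) {x y : V}
    {c : ℂ} {π : V → V} (heig : ∀ w, s y w = c * a y w) (hπ : ∀ v, s (v - π v) y = 0)
    (hx : ∀ v, a x v = s y (π v)) : x = c • y := by
  refine ha.ext_left fun v => ?_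
  have hproj : s y (v - π v) = 0 := hs.eq_zero_comm.1 (hπ v)
  rw [← hs.toSesq_apply, map_sub, sub_eq_zero] at hproj
  rw [hx, ← hs.toSesq_apply, ← hproj, hs.toSesq_apply, heig, ha.2.1]

variable {ι : Type*} {φ : ι → V} {lam : ι → ℂ}

lemma forall_apply_eq_zero_iff_forall_mem_span (ha : IsHermitianPD a) (hs : IsHermitianPD s)
    (hlam : ∀ j, lam j ≠ 0) (heig : ∀ j w, s (φ j) w = lam j * a (φ j) w) (S : Set ι) (w : V) :
    (∀ j ∈ S, s w (φ j) = 0) ↔ ∀ x ∈ span ℂ (φ '' S), a x w = 0 := by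
  simp_rw [apply_eq_zero_iff_of_eigenvector hs (hlam _) (heig _)]
  refine ⟨fun h x hx => ha.eq_zero_of_mem_span_left hx ?_,
    fun h j hj => h _ (subset_span ⟨j, hj, rfl⟩)⟩
  rintro _ ⟨j, hj, rfl⟩
  exact h j hj

theorem coarse_space_eq_span (ha : IsHermitianPD a) (hs : IsHermitianPD s)
    (hlam : ∀ j, lam j ≠ 0) (heig : ∀ j w, s (φ j) w = lam j * a (φ j) w)
    (hspan : span ℂ (range φ) = ⊤) (hsorth : Pairwise fun j k => s (φ j) (φ k) = 0)
    (S : Set ι) :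
    {u : V | ∀ w, (∀ j ∈ S, s w (φ j) = 0) → a u w = 0} = span ℂ (φ '' S) := by
  simp_rw [forall_apply_eq_zero_iff_forall_mem_span ha hs hlam heig S]
  refine ha.orthogonal_orthogonal_eq (q := span ℂ (φ '' Sᶜ)) ?_ fun x hx y hy => ?_
  · rw [← span_union, ← image_union, union_compl_self, image_univ, hspan]
  · refine (forall_apply_eq_zero_iff_forall_mem_span ha hs hlam heig S y).1 (fun j hj => ?_) x hx
    refine hs.eq_zero_of_mem_span_left hy ?_
    rintro _ ⟨k, hk, rfl⟩
    exact hsorth (ne_of_mem_of_not_mem hj hk).symm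

end GeneralizedEigenbasis

theorem psi_basis_of_coarse_space_general
    {V : Type*} [AddCommGroup V] [Module ℂ V]
    (n : ℕ)
    (a s : V → V → ℂ) (ha : IsHermitianPD a) (hs : IsHermitianPD s)
    (φ : Fin n → V) (lam : Fin n → ℝ)
    (hindep : LinearIndependent ℂ φ)
    (hspan : Submodule.span ℂ (Set.range φ) = ⊤)
    (hpos : ∀ j : Fin n, 0 < lam j)
    (heig : ∀ (j : Fin n) (w : V), s (φ j) w = (lam j : ℂ) * a (φ j) w)
    (horth : ∀ j k : Fin n, j ≠ k → s (φ j) (φ k) = 0 ∧ a (φ j) (φ k) = 0)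
    (l : ℕ) (hln : l ≤ n)
    (π : V → V)
    (hπorth : ∀ (v : V) (j : Fin n), (j : ℕ) < l → s (v - π v) (φ j) = 0)
    (ψ : Fin l → V)
    (hψ : ∀ (j : Fin l) (v : V), a (ψ j) v = s (φ (Fin.castLE hln j)) (π v)) :
    LinearIndependent ℂ ψ ∧
    (Submodule.span ℂ (Set.range ψ) : Set V) =
      {u : V | ∀ w : V, (∀ j : Fin n, (j : ℕ) < l → s w (φ j) = 0) → a u w = 0} := by
  have hlam : ∀ j, (lam j : ℂ) ≠ 0 := fun j => Complex.ofReal_ne_zero.2 (hpos j).ne'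
  have hψφ : ψ = fun j => (lam (Fin.castLE hln j) : ℂ) • φ (Fin.castLE hln j) := funext fun j =>
    eq_smul_of_apply_eq_apply_proj ha hs (heig _) (fun v => hπorth v _ j.isLt) (hψ j)
  refine ⟨?_, ?_⟩
  · rw [hψφ]
    exact (hindep.comp _ (Fin.castLE_injective hln)).units_smul fun j => Units.mk0 _ (hlam _)
  · rw [hψφ, span_range_smul_of_ne_zero fun j => hlam _, range_comp', Fin.range_castLE]
    exact (coarse_space_eq_span ha hs hlam heig hspan (fun j k hjk => (horth j k hjk).1) _).symm

/-- The coarse basis functions `ψ_j` defined by `a(ψ_j, v) = s(φ_j, πv)` (formula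
(2.21) of the paper) form a basis of the coarse space `V_0`, the `a`-orthogonal
complement of `Ṽ = {v : s(v, φ_j) = 0, j ≤ l}`. -/
theorem psi_basis_of_coarse_space
    {V : Type*} [AddCommGroup V] [Module ℂ V] [FiniteDimensional ℂ V]
    (n : ℕ) (hn : 1 ≤ n) (hdim : Module.finrank ℂ V = n)
    (a s : V → V → ℂ) (ha : IsHermitianPD a) (hs : IsHermitianPD s)
    (φ : Fin n → V) (lam : Fin n → ℝ)
    (hindep : LinearIndependent ℂ φ)
    (hspan : Submodule.span ℂ (Set.range φ) = ⊤)
    (hmono : ∀ j k : Fin n, j ≤ k → lam k ≤ lam j)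
    (hpos : ∀ j : Fin n, 0 < lam j)
    (heig : ∀ (j : Fin n) (w : V), s (φ j) w = (lam j : ℂ) * a (φ j) w)
    (horth : ∀ j k : Fin n, j ≠ k → s (φ j) (φ k) = 0 ∧ a (φ j) (φ k) = 0)
    (hnorm : ∀ j : Fin n, s (φ j) (φ j) = 1)
    (Lam : ℝ) (hLam : 1 < Lam)
    (l : ℕ) (hln : l ≤ n)
    (hge : ∀ j : Fin n, (j : ℕ) < l → Lam ≤ lam j)
    (hlt : ∀ j : Fin n, l ≤ (j : ℕ) → lam j < Lam)
    (π : V → V)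
    (hπmem : ∀ v : V, π v ∈ Submodule.span ℂ (φ '' {j : Fin n | (j : ℕ) < l}))
    (hπorth : ∀ (v : V) (j : Fin n), (j : ℕ) < l → s (v - π v) (φ j) = 0)
    (ψ : Fin l → V)
    (hψ : ∀ (j : Fin l) (v : V), a (ψ j) v = s (φ (Fin.castLE hln j)) (π v)) :
    LinearIndependent ℂ ψ ∧
    (Submodule.span ℂ (Set.range ψ) : Set V) =
      {u : V | ∀ w : V, (∀ j : Fin n, (j : ℕ) < l → s w (φ j) = 0) → a u w = 0} :=
  psi_basis_of_coarse_space_general n a s ha hs φ lam hindep hspan hpos heig horth l hln π hπorth ψ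
    hψ
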